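/- For all natural numbers k and j: ∫_{−1}^{1} W_k(x) P_j(x) dx = 2/((2k+3)(2k+1)) if j = k; ∫_{−1}^{1} W_k(x) P_j(x) dx = −2/((2k+3)(2k+5)) if j = k + 2; and ∫_{−1}^{1} W_k(x) P_j(x) dx = 0 otherwise. -/

import Mathlib

open Polynomial

/-- The `k`-th Legendre polynomial, via Rodrigues' formula
`P_k = 1/(2^k k!) (d/dx)^k (x² − 1)^k`. -/
noncomputable def legendre (k : ℕ) : Polynomial ℝ :=
  C (1 / (2 ^ k * (k.factorial : ℝ))) * derivative^[k] ((X ^ 2 - 1) ^ k)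

/-- The `k`-th integrated Legendre (bubble) function
`W_k = (P_k − P_{k+2})/(2k+3)`, as a polynomial. -/
noncomputable def bubbleW (k : ℕ) : Polynomial ℝ :=
  C (1 / (2 * (k : ℝ) + 3)) * (legendre k - legendre (k + 2))

/-!
Rodrigues' formula writes `P_k = c_k D^k (x² - 1)^k` with `c_k = 1 / (2^k k!)`, and every derivative
of `(x² - 1)^k` of order below `k` vanishes at `±1`. So `k` integrations by parts without boundary
terms give `∫ P_k q = (-1)^k c_k ∫ (x² - 1)^k D^k q` for every polynomial `q`. For `q = P_j` with
`j < k` the right side vanishes, and for `j = k` the derivative `D^k P_k = c_k (2k)!` is constant,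
so `∫ P_k²` reduces to `∫ (x² - 1)^k`, which a two-term recursion evaluates. Thus
`∫ P_k P_j = 2 δ_{jk} / (2k + 1)`, and the theorem follows by linearity from
`W_k = (P_k - P_{k+2}) / (2k + 3)`.
-/

open Nat

namespace Polynomial

theorem IsRoot.iterate_derivative_pow {R : Type*} [CommSemiring R] {p : R[X]} {x : R}
    (hx : p.IsRoot x) {m n : ℕ} (hmn : m < n) : (derivative^[m] (p ^ n)).IsRoot x := by
  refine IsRoot.dvd ?_ (pow_sub_dvd_iterate_derivative_pow p n m)
  simp [IsRoot.def, hx.eq_zero, Nat.sub_ne_zero_of_lt hmn]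

theorem Monic.iterate_derivative_natDegree {R : Type*} [Semiring R] {p : R[X]} (hp : p.Monic) :
    derivative^[p.natDegree] p = C (p.natDegree ! : R) := by
  have hdeg : (derivative^[p.natDegree] p).natDegree = 0 := by
    simpa using natDegree_iterate_derivative p p.natDegree
  rw [eq_C_of_natDegree_eq_zero hdeg, coeff_iterate_derivative, zero_add, Nat.descFactorial_self,
    hp.coeff_natDegree, nsmul_one]

variable {a b : ℝ}

theorem integral_eval_derivative (p : ℝ[X]) :
    ∫ x in a..b, (derivative p).eval x = p.eval b - p.eval a :=
  intervalIntegral.integral_eq_sub_of_hasDerivAt (fun x _ ↦ p.hasDerivAt x)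
    (p.derivative.continuous.intervalIntegrable _ _)

theorem integral_eval_derivative_mul {p : ℝ[X]} (ha : p.IsRoot a) (hb : p.IsRoot b) (q : ℝ[X]) :
    ∫ x in a..b, (derivative p).eval x * q.eval x =
      -∫ x in a..b, p.eval x * (derivative q).eval x := by
  have h := integral_eval_derivative (a := a) (b := b) (p * q)
  simp only [derivative_mul, eval_add, eval_mul, ha.eq_zero, hb.eq_zero, zero_mul, sub_zero] at h
  rw [intervalIntegral.integral_add (Continuous.intervalIntegrable (by fun_prop) _ _)
    (Continuous.intervalIntegrable (by fun_prop) _ _)] at h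
  linarith

theorem integral_eval_iterate_derivative_mul {p : ℝ[X]} {n : ℕ}
    (h : ∀ i < n, (derivative^[i] p).IsRoot a ∧ (derivative^[i] p).IsRoot b) (q : ℝ[X]) :
    ∫ x in a..b, (derivative^[n] p).eval x * q.eval x =
      (-1) ^ n * ∫ x in a..b, p.eval x * (derivative^[n] q).eval x := by
  induction n generalizing q with
  | zero => simp
  | succ n ih =>
    obtain ⟨ha, hb⟩ := h n n.lt_succ_self
    rw [Function.iterate_succ_apply', integral_eval_derivative_mul ha hb,
      ih (fun i hi ↦ h i (hi.trans n.lt_succ_self)), Function.iterate_succ_apply, pow_succ]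
    ring

end Polynomial

theorem monic_X_sq_sub_one : (X ^ 2 - 1 : ℝ[X]).Monic := by
  simpa using monic_X_pow_sub_C (1 : ℝ) two_ne_zero

theorem natDegree_X_sq_sub_one_pow (k : ℕ) : ((X ^ 2 - 1 : ℝ[X]) ^ k).natDegree = 2 * k := by
  have h : (X ^ 2 - 1 : ℝ[X]).natDegree = 2 := by
    simpa using natDegree_X_pow_sub_C (n := 2) (r := (1 : ℝ))
  rw [natDegree_pow, h, mul_comm]

theorem natDegree_legendre_le (k : ℕ) : (legendre k).natDegree ≤ k := by
  refine (natDegree_C_mul_le _ _).trans ((natDegree_iterate_derivative _ k).trans ?_)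
  rw [natDegree_X_sq_sub_one_pow]
  omega

theorem integral_legendre_mul (k : ℕ) (q : ℝ[X]) :
    ∫ x in (-1 : ℝ)..1, (legendre k).eval x * q.eval x =
      (-1) ^ k / (2 ^ k * k !) *
        ∫ x in (-1 : ℝ)..1, (x ^ 2 - 1) ^ k * (derivative^[k] q).eval x := by
  have hroots : ∀ i < k, (derivative^[i] ((X ^ 2 - 1 : ℝ[X]) ^ k)).IsRoot (-1) ∧
      (derivative^[i] ((X ^ 2 - 1 : ℝ[X]) ^ k)).IsRoot 1 := fun i hi ↦
    ⟨IsRoot.iterate_derivative_pow (by simp) hi, IsRoot.iterate_derivative_pow (by simp) hi⟩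
  simp only [legendre, eval_mul, eval_C, mul_assoc]
  rw [intervalIntegral.integral_const_mul, integral_eval_iterate_derivative_mul hroots]
  simp only [eval_pow, eval_sub, eval_X, eval_one]
  ring

theorem integral_sq_sub_one_pow_succ (k : ℕ) :
    (2 * k + 3 : ℝ) * ∫ x in (-1 : ℝ)..1, (x ^ 2 - 1) ^ (k + 1) =
      -((2 * k + 2) * ∫ x in (-1 : ℝ)..1, (x ^ 2 - 1) ^ k) := by
  have hderiv : derivative (X * (X ^ 2 - 1 : ℝ[X]) ^ (k + 1)) =
      C (2 * k + 3 : ℝ) * (X ^ 2 - 1) ^ (k + 1) + C (2 * k + 2 : ℝ) * (X ^ 2 - 1) ^ k := by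
    simp only [derivative_mul, derivative_X, derivative_pow, derivative_sub, derivative_one,
      map_add, map_mul, map_natCast, map_ofNat]
    push_cast
    ring
  have h := integral_eval_derivative (a := -1) (b := 1) (X * (X ^ 2 - 1 : ℝ[X]) ^ (k + 1))
  simp only [hderiv, eval_add, eval_mul, eval_C, eval_pow, eval_sub, eval_X, eval_one] at h
  rw [intervalIntegral.integral_add (Continuous.intervalIntegrable (by fun_prop) _ _)
    (Continuous.intervalIntegrable (by fun_prop) _ _), intervalIntegral.integral_const_mul,
    intervalIntegral.integral_const_mul] at h
  norm_num at h
  linarith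

theorem integral_sq_sub_one_pow (k : ℕ) :
    ∫ x in (-1 : ℝ)..1, (x ^ 2 - 1 : ℝ) ^ k =
      (-1) ^ k * 2 ^ (2 * k + 1) * k ! ^ 2 / (2 * k + 1)! := by
  induction k with
  | zero => norm_num
  | succ k ih =>
    have hrec : ∫ x in (-1 : ℝ)..1, (x ^ 2 - 1 : ℝ) ^ (k + 1) =
        -(2 * k + 2) / (2 * k + 3) * ∫ x in (-1 : ℝ)..1, (x ^ 2 - 1 : ℝ) ^ k := by
      rw [div_mul_eq_mul_div, eq_div_iff (by positivity), mul_comm, integral_sq_sub_one_pow_succ]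
      ring
    rw [hrec, ih, show 2 * (k + 1) + 1 = 2 * k + 1 + 1 + 1 by ring]
    push_cast [factorial_succ]
    field_simp
    ring

theorem iterate_derivative_legendre_of_lt {j k : ℕ} (h : j < k) :
    derivative^[k] (legendre j) = 0 :=
  iterate_derivative_eq_zero ((natDegree_legendre_le j).trans_lt h)

theorem iterate_derivative_legendre_self (k : ℕ) :
    derivative^[k] (legendre k) = C ((2 * k)! / (2 ^ k * k !) : ℝ) := by
  rw [legendre, iterate_derivative_C_mul, ← Function.iterate_add_apply, ← two_mul,
    ← natDegree_X_sq_sub_one_pow k, (monic_X_sq_sub_one.pow k).iterate_derivative_natDegree,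
    natDegree_X_sq_sub_one_pow, ← C_mul, one_div_mul_eq_div]

theorem integral_legendre_mul_legendre_of_lt {j k : ℕ} (h : j < k) :
    ∫ x in (-1 : ℝ)..1, (legendre k).eval x * (legendre j).eval x = 0 := by
  simp [integral_legendre_mul, iterate_derivative_legendre_of_lt h]

theorem integral_legendre_mul_self (k : ℕ) :
    ∫ x in (-1 : ℝ)..1, (legendre k).eval x * (legendre k).eval x = 2 / (2 * k + 1) := by
  rw [integral_legendre_mul, iterate_derivative_legendre_self]
  simp only [eval_C]
  rw [intervalIntegral.integral_mul_const, integral_sq_sub_one_pow, factorial_succ]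
  push_cast
  field_simp
  rw [← pow_mul, mul_comm k 2, pow_mul, neg_one_sq, one_pow]
  ring

theorem integral_legendre_mul_legendre (k j : ℕ) :
    ∫ x in (-1 : ℝ)..1, (legendre k).eval x * (legendre j).eval x =
      if j = k then 2 / (2 * k + 1 : ℝ) else 0 := by
  rcases lt_trichotomy j k with h | rfl | h
  · rw [if_neg h.ne, integral_legendre_mul_legendre_of_lt h]
  · rw [if_pos rfl, integral_legendre_mul_self]
  · simp only [if_neg h.ne', mul_comm ((legendre k).eval _),
      integral_legendre_mul_legendre_of_lt h]

theorem integral_bubbleW_mul (k : ℕ) (q : ℝ[X]) :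
    ∫ x in (-1 : ℝ)..1, (bubbleW k).eval x * q.eval x =
      ((∫ x in (-1 : ℝ)..1, (legendre k).eval x * q.eval x) -
        ∫ x in (-1 : ℝ)..1, (legendre (k + 2)).eval x * q.eval x) / (2 * k + 3) := by
  simp only [bubbleW, eval_mul, eval_C, eval_sub, mul_assoc, sub_mul]
  rw [intervalIntegral.integral_const_mul, intervalIntegral.integral_sub
    (Continuous.intervalIntegrable (by fun_prop) _ _)
    (Continuous.intervalIntegrable (by fun_prop) _ _)]
  ring

/-- The inner products of the integrated Legendre functions with the
Legendre polynomials: `∫ W_k P_j = 2/((2k+3)(2k+1))` if `j = k`,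
`∫ W_k P_j = −2/((2k+3)(2k+5))` if `j = k+2`, and `∫ W_k P_j = 0` otherwise. -/
theorem bubble_legendre_inner_products (k j : ℕ) :
    (j = k → (∫ x in (-1 : ℝ)..1, (bubbleW k).eval x * (legendre j).eval x) =
        2 / ((2 * (k : ℝ) + 3) * (2 * (k : ℝ) + 1))) ∧
    (j = k + 2 → (∫ x in (-1 : ℝ)..1, (bubbleW k).eval x * (legendre j).eval x) =
        -2 / ((2 * (k : ℝ) + 3) * (2 * (k : ℝ) + 5))) ∧
    (j ≠ k → j ≠ k + 2 →
      (∫ x in (-1 : ℝ)..1, (bubbleW k).eval x * (legendre j).eval x) = 0) := by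
  simp only [integral_bubbleW_mul, integral_legendre_mul_legendre]
  refine ⟨fun h ↦ ?_, fun h ↦ ?_, fun h₁ h₂ ↦ by simp [h₁, h₂]⟩
  · subst j
    simp only [if_pos, if_neg (by omega : k ≠ k + 2)]
    field_simp
    ring
  · subst h
    simp only [if_pos, if_neg (by omega : k + 2 ≠ k)]
    push_cast
    field_simp
    ring
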